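/- Consider the Newtonian 1+4 coorbital problem (s = 3) with angles satisfying −π/2 < θ₄ < θ₃ < 0 < θ₂ < θ₁ and θ₁ − θ₄ = π (i.e., the first and fourth infinitesimal masses are collinear with the central mass). Then there exist no positive masses m₁, m₂, m₃, m₄ > 0 with F m = 0. -/
import Mathlib


open Real Matrix

/-- `f_s(θ) = sin(θ)·(2^{-s}|sin(θ/2)|^{-s} − 1)`, the coorbital kernel function
for a homogeneous potential with exponent `s`. -/
noncomputable def coorbitalF (s θ : ℝ) : ℝ :=
  Real.sin θ * ((2 : ℝ) ^ (-s) * |Real.sin (θ / 2)| ^ (-s) - 1)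

lemma coorbitalF_zero : coorbitalF 3 0 = 0 := by simp [coorbitalF]

lemma coorbitalF_pi : coorbitalF 3 π = 0 := by simp [coorbitalF]

lemma coorbitalF_neg_arg (x : ℝ) : coorbitalF 3 (-x) = - coorbitalF 3 x := by
  unfold coorbitalF
  rw [neg_div, Real.sin_neg, Real.sin_neg, abs_neg]
  ring

lemma coorbitalF_eq (x : ℝ) (hx : 0 < x) (hxπ : x < π) :
    coorbitalF 3 x = Real.sin x * (1/8 * ((Real.sin (x/2))^3)⁻¹ - 1) := by
  have hpi := Real.pi_pos
  have h2 : 0 < Real.sin (x/2) :=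
    Real.sin_pos_of_pos_of_lt_pi (by linarith) (by linarith)
  have e1 : (2:ℝ) ^ (-(3:ℝ)) = 1/8 := by
    rw [Real.rpow_neg (by norm_num : (0:ℝ) ≤ 2),
      show ((3:ℝ)) = ((3:ℕ):ℝ) by norm_num, Real.rpow_natCast]
    norm_num
  have e2 : (Real.sin (x/2)) ^ (-(3:ℝ)) = ((Real.sin (x/2))^3)⁻¹ := by
    rw [Real.rpow_neg h2.le, show ((3:ℝ)) = ((3:ℕ):ℝ) by norm_num, Real.rpow_natCast]
  unfold coorbitalF
  rw [abs_of_pos h2, e1, e2]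

lemma coorbitalF_pos_iff (x : ℝ) (hx : 0 < x) (hxπ : x < π) :
    0 < coorbitalF 3 x ↔ x < π/3 := by
  have hpi := Real.pi_pos
  have hs : 0 < Real.sin x := Real.sin_pos_of_pos_of_lt_pi hx hxπ
  have h2 : 0 < Real.sin (x/2) :=
    Real.sin_pos_of_pos_of_lt_pi (by linarith) (by linarith)
  rw [coorbitalF_eq x hx hxπ]
  set t := Real.sin (x/2) with ht
  have hu : (0:ℝ) < t^3 := by positivity
  have hiu : (0:ℝ) < (t^3)⁻¹ := by positivity
  have hmul : (t^3)⁻¹ * (t^3) = 1 := inv_mul_cancel₀ hu.ne'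
  have hmono := Real.strictMonoOn_sin
  have hmem1 : x/2 ∈ Set.Icc (-(π/2)) (π/2) := ⟨by linarith, by linarith⟩
  have hmem2 : (π/6) ∈ Set.Icc (-(π/2)) (π/2) := ⟨by linarith, by linarith⟩
  constructor
  · intro h
    by_contra hc
    push_neg at hc
    have hle : (1:ℝ)/2 ≤ t := by
      rcases eq_or_lt_of_le hc with he | hl
      · rw [ht, show x/2 = π/6 by linarith, Real.sin_pi_div_six]
      · have := hmono hmem2 hmem1 (by linarith)
        rw [Real.sin_pi_div_six] at this
        exact this.le
    have hcube : (1:ℝ)/8 ≤ t^3 := by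
      have := pow_le_pow_left₀ (show (0:ℝ) ≤ 1/2 by norm_num) hle 3
      norm_num at this; linarith
    have hkey : 1/8 * (t^3)⁻¹ - 1 ≤ 0 := by
      nlinarith [mul_nonneg hiu.le (show (0:ℝ) ≤ t^3 - 1/8 by linarith), hmul]
    nlinarith [mul_nonneg hs.le (neg_nonneg.mpr hkey)]
  · intro h
    have hlt : t < 1/2 := by
      have := hmono hmem1 hmem2 (by linarith)
      rwa [Real.sin_pi_div_six] at this
    have hcube : t^3 < 1/8 := by
      have := pow_lt_pow_left₀ hlt h2.le (show 3 ≠ 0 by norm_num)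
      norm_num at this; linarith
    have hkey : 0 < 1/8 * (t^3)⁻¹ - 1 := by
      nlinarith [mul_pos hiu (show (0:ℝ) < 1/8 - t^3 by linarith), hmul]
    exact mul_pos hs hkey

lemma coorbitalF_neg_of (x : ℝ) (hx : π/3 < x) (hxπ : x < π) : coorbitalF 3 x < 0 := by
  have hpi := Real.pi_pos
  have hx0 : 0 < x := by linarith
  rcases lt_trichotomy (coorbitalF 3 x) 0 with h | h | h
  · exact h
  · exfalso
    -- f x = 0 with π/3 < x < π : impossible, show strictly negative directly
    have hs : 0 < Real.sin x := Real.sin_pos_of_pos_of_lt_pi hx0 hxπ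
    have h2 : 0 < Real.sin (x/2) :=
      Real.sin_pos_of_pos_of_lt_pi (by linarith) (by linarith)
    have heq := coorbitalF_eq x hx0 hxπ
    set t := Real.sin (x/2) with ht
    have hmono := Real.strictMonoOn_sin
    have hlt : (1:ℝ)/2 < t := by
      have := hmono (⟨by linarith, by linarith⟩ : (π/6) ∈ Set.Icc (-(π/2)) (π/2))
        (⟨by linarith, by linarith⟩ : x/2 ∈ Set.Icc (-(π/2)) (π/2)) (by linarith)
      rwa [Real.sin_pi_div_six] at this
    have hu : (0:ℝ) < t^3 := by positivity
    have hiu : (0:ℝ) < (t^3)⁻¹ := by positivity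
    have hcube : (1:ℝ)/8 < t^3 := by
      have := pow_lt_pow_left₀ hlt (show (0:ℝ) ≤ 1/2 by norm_num) (show 3 ≠ 0 by norm_num)
      norm_num at this; linarith
    have hmul : (t^3)⁻¹ * (t^3) = 1 := inv_mul_cancel₀ hu.ne'
    have hkey : 1/8 * (t^3)⁻¹ - 1 < 0 := by
      nlinarith [mul_pos hiu (show (0:ℝ) < t^3 - 1/8 by linarith), hmul]
    nlinarith [mul_pos hs (neg_pos.mpr hkey), heq, h]
  · exfalso
    have := (coorbitalF_pos_iff x hx0 hxπ).mp h
    linarith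

/-- Newtonian 1+4 coorbital problem (`s = 3`) with angles satisfying
`−π/2 < θ₄ < θ₃ < 0 < θ₂ < θ₁` and `θ₁ − θ₄ = π` (so the first and fourth
infinitesimal masses are collinear with the central mass).  Then there are no
positive masses `m₁, m₂, m₃, m₄ > 0` with `F m = 0`. -/
theorem no_collinear_pair_one_plus_four
    (θ₁ θ₂ θ₃ θ₄ : ℝ) (h₄ : -(π / 2) < θ₄) (h₄₃ : θ₄ < θ₃) (h₃ : θ₃ < 0)
    (h₂ : 0 < θ₂) (h₂₁ : θ₂ < θ₁) (hcoll : θ₁ - θ₄ = π) :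
    ¬ ∃ m : Fin 4 → ℝ, (∀ i, 0 < m i) ∧
      (Matrix.of fun i j : Fin 4 =>
        coorbitalF 3 (![θ₁, θ₂, θ₃, θ₄] i - ![θ₁, θ₂, θ₃, θ₄] j)).mulVec m = 0 := by
  rintro ⟨m, hm, heq⟩
  have hpi := Real.pi_pos
  have e1 := congrFun heq 0
  have e2 := congrFun heq 1
  have e4 := congrFun heq 3
  simp [Matrix.mulVec, dotProduct, Fin.sum_univ_four, coorbitalF_zero,
    hcoll, show θ₄ - θ₁ = -π by linarith, coorbitalF_neg_arg, coorbitalF_pi] at e1 e2 e4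
  rw [show θ₄ - θ₂ = -(θ₂ - θ₄) by ring, coorbitalF_neg_arg,
      show θ₄ - θ₃ = -(θ₃ - θ₄) by ring, coorbitalF_neg_arg] at e4
  rw [show θ₂ - θ₁ = -(θ₁ - θ₂) by ring, coorbitalF_neg_arg] at e2
  -- f(θ₁ - θ₃) < 0
  have hB : coorbitalF 3 (θ₁ - θ₃) < 0 :=
    coorbitalF_neg_of _ (by linarith) (by linarith)
  -- f(θ₁ - θ₂) > 0, hence θ₁ - θ₂ < π/3
  have hApos : 0 < coorbitalF 3 (θ₁ - θ₂) := by
    nlinarith [mul_pos (neg_pos.mpr hB) (hm 2), hm 1, e1]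
  have h12 : θ₁ - θ₂ < π/3 :=
    (coorbitalF_pos_iff _ (by linarith) (by linarith)).mp hApos
  -- f(θ₂ - θ₄) < 0
  have hC : coorbitalF 3 (θ₂ - θ₄) < 0 :=
    coorbitalF_neg_of _ (by linarith) (by linarith)
  -- f(θ₃ - θ₄) > 0, hence θ₃ - θ₄ < π/3
  have hDpos : 0 < coorbitalF 3 (θ₃ - θ₄) := by
    nlinarith [mul_pos (neg_pos.mpr hC) (hm 1), hm 2, e4]
  have h34 : θ₃ - θ₄ < π/3 :=
    (coorbitalF_pos_iff _ (by linarith) (by linarith)).mp hDpos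
  -- f(θ₂ - θ₃) > 0, hence θ₂ - θ₃ < π/3
  have hEpos : 0 < coorbitalF 3 (θ₂ - θ₃) := by
    nlinarith [mul_pos hApos (hm 0), mul_pos (neg_pos.mpr hC) (hm 3), hm 2, e2]
  have h23 : θ₂ - θ₃ < π/3 :=
    (coorbitalF_pos_iff _ (by linarith) (by linarith)).mp hEpos
  linarith
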